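/- Braid relations for vertex operators (eq. (2.26), first relation): With R̂₊ := τ₁₂(F) · (R ⊗ 1_V) · F⁻¹ and R̂₋ := τ₁₂(F) · (τ(R)⁻¹ ⊗ 1_V) · F⁻¹ in A ⊗ A ⊗ V (τ₁₂ flips the two A-factors), one has R̂₊ · Φ₂ · Φ₁ = Φ₁ · Φ₂ · (R ⊗ 1_V) and R̂₋ · Φ₂ · Φ₁ = Φ₁ · Φ₂ · (τ(R)⁻¹ ⊗ 1_V). -/

import Mathlib

open scoped TensorProduct

noncomputable section

namespace Stmt2

variable (A V : Type*) [Ring A] [Bialgebra ℂ A] [Ring V] [Algebra ℂ V]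

/-- Map units along a `ℂ`-algebra homomorphism. -/
def uMap {X Y : Type*} [Semiring X] [Semiring Y] [Algebra ℂ X] [Algebra ℂ Y] (f : X →ₐ[ℂ] Y) :
    Xˣ →* Yˣ :=
  Units.map (f : X →* Y)

/-- Embedding of `A ⊗ A` into `A ⊗ A ⊗ A` with legs in positions 1 and 2. -/
def a12 : A ⊗[ℂ] A →ₐ[ℂ] A ⊗[ℂ] (A ⊗[ℂ] A) :=
  Algebra.TensorProduct.map (AlgHom.id ℂ A) Algebra.TensorProduct.includeLeft

/-- Embedding of `A ⊗ A` into `A ⊗ A ⊗ A` with legs in positions 1 and 3. -/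
def a13 : A ⊗[ℂ] A →ₐ[ℂ] A ⊗[ℂ] (A ⊗[ℂ] A) :=
  Algebra.TensorProduct.map (AlgHom.id ℂ A) Algebra.TensorProduct.includeRight

/-- Embedding of `A ⊗ A` into `A ⊗ A ⊗ A` with legs in positions 2 and 3. -/
def a23 : A ⊗[ℂ] A →ₐ[ℂ] A ⊗[ℂ] (A ⊗[ℂ] A) :=
  Algebra.TensorProduct.includeRight

/-- `Δ ⊗ id_A : A ⊗ A → A ⊗ A ⊗ A`. -/
def deltaIdA : A ⊗[ℂ] A →ₐ[ℂ] A ⊗[ℂ] (A ⊗[ℂ] A) :=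
  (Algebra.TensorProduct.assoc ℂ ℂ ℂ A A A).toAlgHom.comp
    (Algebra.TensorProduct.map (Bialgebra.comulAlgHom ℂ A) (AlgHom.id ℂ A))

/-- `id_A ⊗ Δ : A ⊗ A → A ⊗ A ⊗ A`. -/
def idDeltaA : A ⊗[ℂ] A →ₐ[ℂ] A ⊗[ℂ] (A ⊗[ℂ] A) :=
  Algebra.TensorProduct.map (AlgHom.id ℂ A) (Bialgebra.comulAlgHom ℂ A)

/-- Embedding of `A ⊗ V` into `A ⊗ A ⊗ V` with legs in positions 1 and 3. -/
def leg13 : A ⊗[ℂ] V →ₐ[ℂ] A ⊗[ℂ] (A ⊗[ℂ] V) :=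
  Algebra.TensorProduct.map (AlgHom.id ℂ A) Algebra.TensorProduct.includeRight

/-- Embedding of `A ⊗ V` into `A ⊗ A ⊗ V` with legs in positions 2 and 3. -/
def leg23 : A ⊗[ℂ] V →ₐ[ℂ] A ⊗[ℂ] (A ⊗[ℂ] V) :=
  Algebra.TensorProduct.includeRight

/-- Embedding of `A ⊗ A` into `A ⊗ A ⊗ V` with legs in positions 1 and 2,
i.e. `X ↦ X ⊗ 1_V`. -/
def leg12 : A ⊗[ℂ] A →ₐ[ℂ] A ⊗[ℂ] (A ⊗[ℂ] V) :=
  Algebra.TensorProduct.map (AlgHom.id ℂ A) Algebra.TensorProduct.includeLeft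

/-- `Δ ⊗ id_V : A ⊗ V → A ⊗ A ⊗ V`. -/
def deltaId : A ⊗[ℂ] V →ₐ[ℂ] A ⊗[ℂ] (A ⊗[ℂ] V) :=
  (Algebra.TensorProduct.assoc ℂ ℂ ℂ A A V).toAlgHom.comp
    (Algebra.TensorProduct.map (Bialgebra.comulAlgHom ℂ A) (AlgHom.id ℂ V))

/-- The fusion element `F = Φ₂ · Φ₁ · ((Δ ⊗ id_V)(Φ))⁻¹ ∈ A ⊗ A ⊗ V`. -/
def fusion (Φ : (A ⊗[ℂ] V)ˣ) : (A ⊗[ℂ] (A ⊗[ℂ] V))ˣ :=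
  uMap (leg23 A V) Φ * uMap (leg13 A V) Φ * (uMap (deltaId A V) Φ)⁻¹

/-- The flip automorphism `τ₁₂` of `A ⊗ A ⊗ V` exchanging the two `A`-factors. -/
def tau12 : (A ⊗[ℂ] (A ⊗[ℂ] V)) ≃ₐ[ℂ] (A ⊗[ℂ] (A ⊗[ℂ] V)) :=
  (Algebra.TensorProduct.assoc ℂ ℂ ℂ A A V).symm.trans
    ((Algebra.TensorProduct.congr (Algebra.TensorProduct.comm ℂ A A) AlgEquiv.refl).trans
      (Algebra.TensorProduct.assoc ℂ ℂ ℂ A A V))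

/-- The braiding element `R̂₊ = τ₁₂(F) · (R ⊗ 1_V) · F⁻¹`. -/
def rrPlus (R : (A ⊗[ℂ] A)ˣ) (Φ : (A ⊗[ℂ] V)ˣ) : (A ⊗[ℂ] (A ⊗[ℂ] V))ˣ :=
  uMap (tau12 A V).toAlgHom (fusion A V Φ) * uMap (leg12 A V) R * (fusion A V Φ)⁻¹

/-- The braiding element `R̂₋ = τ₁₂(F) · (τ(R)⁻¹ ⊗ 1_V) · F⁻¹`. -/
def rrMinus (R : (A ⊗[ℂ] A)ˣ) (Φ : (A ⊗[ℂ] V)ˣ) : (A ⊗[ℂ] (A ⊗[ℂ] V))ˣ :=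
  uMap (tau12 A V).toAlgHom (fusion A V Φ) *
    uMap (leg12 A V) ((uMap (Algebra.TensorProduct.comm ℂ A A).toAlgHom R)⁻¹) *
    (fusion A V Φ)⁻¹

lemma uMap_comp {X Y Z : Type*} [Semiring X] [Semiring Y] [Semiring Z]
    [Algebra ℂ X] [Algebra ℂ Y] [Algebra ℂ Z] (f : Y →ₐ[ℂ] Z) (g : X →ₐ[ℂ] Y) (u : Xˣ) :
    uMap f (uMap g u) = uMap (f.comp g) u := by
  ext; rfl

lemma leg12_e3_comm (X : A ⊗[ℂ] A) (v : V) :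
    leg12 A V X * ((1 : A) ⊗ₜ[ℂ] ((1 : A) ⊗ₜ[ℂ] v)) =
      ((1 : A) ⊗ₜ[ℂ] ((1 : A) ⊗ₜ[ℂ] v)) * leg12 A V X := by
  induction X using TensorProduct.induction_on with
  | zero => simp
  | tmul x y => simp [leg12, Algebra.TensorProduct.tmul_mul_tmul]
  | add a b ha hb => simp [map_add, add_mul, mul_add, ha, hb]

lemma assoc_eq (w : A ⊗[ℂ] A) (v : V) :
    (Algebra.TensorProduct.assoc ℂ ℂ ℂ A A V) (w ⊗ₜ[ℂ] v) =
      leg12 A V w * ((1 : A) ⊗ₜ[ℂ] ((1 : A) ⊗ₜ[ℂ] v)) := by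
  induction w using TensorProduct.induction_on with
  | zero => simp
  | tmul x y => simp [leg12, Algebra.TensorProduct.tmul_mul_tmul]
  | add a b ha hb => simp [TensorProduct.add_tmul, map_add, add_mul, ha, hb]

lemma deltaId_tmul (a : A) (v : V) :
    deltaId A V (a ⊗ₜ[ℂ] v) =
      leg12 A V (Bialgebra.comulAlgHom ℂ A a) * ((1 : A) ⊗ₜ[ℂ] ((1 : A) ⊗ₜ[ℂ] v)) := by
  show (Algebra.TensorProduct.assoc ℂ ℂ ℂ A A V)
      ((Algebra.TensorProduct.map (Bialgebra.comulAlgHom ℂ A) (AlgHom.id ℂ V)) (a ⊗ₜ[ℂ] v)) = _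
  rw [Algebra.TensorProduct.map_tmul, AlgHom.coe_id, id_eq, assoc_eq]

lemma tau12_leg12 (X : A ⊗[ℂ] A) :
    tau12 A V (leg12 A V X) = leg12 A V (Algebra.TensorProduct.comm ℂ A A X) := by
  induction X using TensorProduct.induction_on with
  | zero => simp
  | tmul x y => simp [tau12, leg12]
  | add a b ha hb => simp [map_add, ha, hb]

lemma tau12_e3 (v : V) :
    tau12 A V ((1 : A) ⊗ₜ[ℂ] ((1 : A) ⊗ₜ[ℂ] v)) = (1 : A) ⊗ₜ[ℂ] ((1 : A) ⊗ₜ[ℂ] v) := by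
  simp [tau12]

lemma key_comm (S : A ⊗[ℂ] A)
    (hS : ∀ a : A, S * Bialgebra.comulAlgHom ℂ A a =
      Algebra.TensorProduct.comm ℂ A A (Bialgebra.comulAlgHom ℂ A a) * S)
    (x : A ⊗[ℂ] V) :
    leg12 A V S * deltaId A V x = tau12 A V (deltaId A V x) * leg12 A V S := by
  induction x using TensorProduct.induction_on with
  | zero => simp
  | tmul a v =>
      rw [deltaId_tmul, map_mul, tau12_leg12, tau12_e3, ← mul_assoc, ← map_mul, hS a, map_mul,
        mul_assoc, leg12_e3_comm, ← mul_assoc]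
  | add a b ha hb => simp [map_add, add_mul, mul_add, ha, hb]

lemma tau_leg23 : (tau12 A V).toAlgHom.comp (leg23 A V) = leg13 A V := by
  apply Algebra.TensorProduct.ext <;> ext x <;>
    simp [tau12, leg23, leg13, Algebra.TensorProduct.includeRight_apply,
      Algebra.TensorProduct.assoc_tmul, Algebra.TensorProduct.assoc_symm_tmul,
      Algebra.TensorProduct.map_tmul, Algebra.TensorProduct.comm_tmul, Algebra.TensorProduct.one_def]

lemma tau_leg13 : (tau12 A V).toAlgHom.comp (leg13 A V) = leg23 A V := by
  apply Algebra.TensorProduct.ext <;> ext x <;>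
    simp [tau12, leg23, leg13, Algebra.TensorProduct.includeRight_apply,
      Algebra.TensorProduct.assoc_tmul, Algebra.TensorProduct.assoc_symm_tmul,
      Algebra.TensorProduct.map_tmul, Algebra.TensorProduct.comm_tmul, Algebra.TensorProduct.one_def]

lemma key_units (S : (A ⊗[ℂ] A)ˣ)
    (hS : ∀ a : A, (S : A ⊗[ℂ] A) * Bialgebra.comulAlgHom ℂ A a =
      Algebra.TensorProduct.comm ℂ A A (Bialgebra.comulAlgHom ℂ A a) * S)
    (Φ : (A ⊗[ℂ] V)ˣ) :
    uMap (leg12 A V) S * uMap (deltaId A V) Φ =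
      uMap ((tau12 A V).toAlgHom.comp (deltaId A V)) Φ * uMap (leg12 A V) S := by
  ext
  exact key_comm A V (S : A ⊗[ℂ] A) hS (Φ : A ⊗[ℂ] V)

lemma braid_one (S : (A ⊗[ℂ] A)ˣ)
    (hS : ∀ a : A, (S : A ⊗[ℂ] A) * Bialgebra.comulAlgHom ℂ A a =
      Algebra.TensorProduct.comm ℂ A A (Bialgebra.comulAlgHom ℂ A a) * S)
    (Φ : (A ⊗[ℂ] V)ˣ) :
    uMap (tau12 A V).toAlgHom (fusion A V Φ) * uMap (leg12 A V) S * (fusion A V Φ)⁻¹ *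
        uMap (leg23 A V) Φ * uMap (leg13 A V) Φ =
      uMap (leg13 A V) Φ * uMap (leg23 A V) Φ * uMap (leg12 A V) S := by
  set P1 := uMap (leg13 A V) Φ with hP1
  set P2 := uMap (leg23 A V) Φ with hP2
  set D := uMap (deltaId A V) Φ with hD
  set D' := uMap ((tau12 A V).toAlgHom.comp (deltaId A V)) Φ with hD'
  set Sl := uMap (leg12 A V) S with hSl
  have e1 : uMap (tau12 A V).toAlgHom (fusion A V Φ) = P1 * P2 * D'⁻¹ := by
    rw [fusion, map_mul, map_mul, map_inv, uMap_comp, uMap_comp, uMap_comp, tau_leg23, tau_leg13]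
  have h : Sl * D = D' * Sl := key_units A V S hS Φ
  have h2 : D'⁻¹ * Sl = Sl * D⁻¹ := by
    rw [inv_mul_eq_iff_eq_mul, ← mul_assoc, ← h, mul_assoc]
    simp
  rw [e1, fusion, ← hP1, ← hP2, ← hD, mul_assoc (P1 * P2) D'⁻¹ Sl, h2]
  group

set_option maxHeartbeats 1600000 in
/-- braid relations for vertex operators:
`R̂₊ · Φ₂ · Φ₁ = Φ₁ · Φ₂ · (R ⊗ 1_V)` and `R̂₋ · Φ₂ · Φ₁ = Φ₁ · Φ₂ · (τ(R)⁻¹ ⊗ 1_V)`. -/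
theorem braid_relations (R : (A ⊗[ℂ] A)ˣ)
    (hR : ∀ a : A, (R : A ⊗[ℂ] A) * Bialgebra.comulAlgHom ℂ A a =
      Algebra.TensorProduct.comm ℂ A A (Bialgebra.comulAlgHom ℂ A a) * R)
    (hR1 : deltaIdA A (R : A ⊗[ℂ] A) = a13 A (R : A ⊗[ℂ] A) * a23 A (R : A ⊗[ℂ] A))
    (hR2 : idDeltaA A (R : A ⊗[ℂ] A) = a13 A (R : A ⊗[ℂ] A) * a12 A (R : A ⊗[ℂ] A))
    (Φ : (A ⊗[ℂ] V)ˣ) :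
    rrPlus A V R Φ * uMap (leg23 A V) Φ * uMap (leg13 A V) Φ =
        uMap (leg13 A V) Φ * uMap (leg23 A V) Φ * uMap (leg12 A V) R ∧
      rrMinus A V R Φ * uMap (leg23 A V) Φ * uMap (leg13 A V) Φ =
        uMap (leg13 A V) Φ * uMap (leg23 A V) Φ *
          uMap (leg12 A V) ((uMap (Algebra.TensorProduct.comm ℂ A A).toAlgHom R)⁻¹) := by
  have hcc : ∀ x : A ⊗[ℂ] A,
      Algebra.TensorProduct.comm ℂ A A (Algebra.TensorProduct.comm ℂ A A x) = x := by
    intro x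
    induction x using TensorProduct.induction_on with
    | zero => simp
    | tmul a b => simp
    | add a b ha hb => simp [map_add, ha, hb]
  constructor
  · rw [rrPlus]
    exact braid_one A V R hR Φ
  · rw [rrMinus]
    apply braid_one A V _ _ Φ
    intro a
    set C := Algebra.TensorProduct.comm ℂ A A
    have hval : (((uMap (C.toAlgHom) R)⁻¹ : (A ⊗[ℂ] A)ˣ) : A ⊗[ℂ] A) =
        C ((R⁻¹ : (A ⊗[ℂ] A)ˣ) : A ⊗[ℂ] A) := by
      rw [← map_inv]; rfl
    rw [hval]
    have hinv : ((R⁻¹ : (A ⊗[ℂ] A)ˣ) : A ⊗[ℂ] A) * C (Bialgebra.comulAlgHom ℂ A a) =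
        Bialgebra.comulAlgHom ℂ A a * ((R⁻¹ : (A ⊗[ℂ] A)ˣ) : A ⊗[ℂ] A) := by
      have := congrArg
        (fun z => ((R⁻¹ : (A ⊗[ℂ] A)ˣ) : A ⊗[ℂ] A) * z * ((R⁻¹ : (A ⊗[ℂ] A)ˣ) : A ⊗[ℂ] A)) (hR a)
      simpa [mul_assoc, Units.inv_mul_cancel_left, Units.mul_inv_cancel_left,
        Units.inv_mul_cancel_right, Units.mul_inv_cancel_right] using this.symm
    have := congrArg C hinv
    simpa [map_mul, hcc] using this

end Stmt2
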